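/- arXiv:1703.09385 — 5 statements merged into one kernel-verified Lean document; each statement's English description precedes it below -/
import Mathlib

section
/- Let (M,d) be a metric space and μ a Borel measure with 0 < μ(B(x,ρ)) < ∞ for every ball, satisfying the volume doubling property (VD). Let φ : M × [0,∞) → [0,∞) be, for each fixed x, strictly increasing and continuous in r with φ(x,0) = 0, and satisfy conditions (pvd1) and (pvd). Then there exists a constant C > 0 such that for every x₀ ∈ M, r > 0, every x ∈ B(x₀, r/2) and every z ∈ M with d(x₀,z) ≥ r, one has μ(B(x, d(x,z))) · φ(x, d(x,z)) ≤ C · μ(B(x₀, d(x₀,z))) · φ(x₀, d(x₀,z)). -/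
open Metric MeasureTheory

/-- Under VD, (pvd1) and (pvd), there is `C > 0` such that for all `x₀`, `r > 0`,
`x ∈ B(x₀, r/2)` and `z` with `d(x₀,z) ≥ r`:
`V(x, d(x,z)) φ(x, d(x,z)) ≤ C V(x₀, d(x₀,z)) φ(x₀, d(x₀,z))`. -/
theorem stmt_6 {M : Type*} [MetricSpace M] [MeasurableSpace M] (μ : Measure M)
    (hvol : ∀ (x : M) (ρ : ℝ), 0 < ρ → 0 < μ (ball x ρ) ∧ μ (ball x ρ) < ⊤)
    (VD : ∃ Cμ : ℝ, 1 ≤ Cμ ∧ ∀ (x : M) (ρ : ℝ), 0 < ρ →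
      μ (ball x (2 * ρ)) ≤ ENNReal.ofReal Cμ * μ (ball x ρ))
    (φ : M → ℝ → ℝ)
    (hφ0 : ∀ x, φ x 0 = 0)
    (hφnonneg : ∀ (x : M) (r : ℝ), 0 ≤ r → 0 ≤ φ x r)
    (hφmono : ∀ x : M, StrictMonoOn (φ x) (Set.Ici (0 : ℝ)))
    (hφcont : ∀ x : M, ContinuousOn (φ x) (Set.Ici (0 : ℝ)))
    (pvd1 : ∃ c₁ c₂ β₁ β₂ : ℝ, 0 < c₁ ∧ 0 < c₂ ∧ 0 < β₁ ∧ β₁ ≤ β₂ ∧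
      ∀ (x : M) (r R : ℝ), 0 < r → r ≤ R →
        c₁ * (R / r) ^ β₁ * φ x r ≤ φ x R ∧ φ x R ≤ c₂ * (R / r) ^ β₂ * φ x r)
    (pvd : ∃ c₃ : ℝ, 1 ≤ c₃ ∧ ∀ (x y : M) (r : ℝ), dist x y ≤ r → φ y r ≤ c₃ * φ x r) :
    ∃ C : ℝ, 0 < C ∧ ∀ (x₀ : M) (r : ℝ), 0 < r → ∀ x ∈ ball x₀ (r / 2), ∀ z : M,
      r ≤ dist x₀ z →
        μ (ball x (dist x z)) * ENNReal.ofReal (φ x (dist x z)) ≤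
          ENNReal.ofReal C *
            (μ (ball x₀ (dist x₀ z)) * ENNReal.ofReal (φ x₀ (dist x₀ z))) := by

  obtain ⟨Cμ, hCμ, hVD⟩ := VD
  obtain ⟨c₁, c₂, β₁, β₂, hc₁, hc₂, hβ₁, hβ, hpvd1⟩ := pvd1
  obtain ⟨c₃, hc₃, hpvd⟩ := pvd
  refine ⟨Cμ * (c₃ * (c₂ * (2:ℝ) ^ β₂)), by positivity, ?_⟩
  intro x₀ r hr x hx z hz
  set d₀ := dist x₀ z with hd₀def
  have hd₀ : 0 < d₀ := lt_of_lt_of_le hr hz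
  have hx' : dist x₀ x < r / 2 := by rw [dist_comm]; exact mem_ball.mp hx
  have hr2 : r / 2 ≤ d₀ := by linarith
  have hdxz : dist x z ≤ 2 * d₀ := by
    calc dist x z ≤ dist x x₀ + d₀ := dist_triangle _ _ _
      _ ≤ r / 2 + d₀ := by rw [dist_comm]; linarith
      _ ≤ 2 * d₀ := by linarith
  have hsub : ball x (dist x z) ⊆ ball x₀ (2 * d₀) := by
    intro y hy
    rw [mem_ball] at hy ⊢
    calc dist y x₀ ≤ dist y x + dist x x₀ := dist_triangle _ _ _
      _ < dist x z + dist x x₀ := by linarith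
      _ ≤ (dist x x₀ + d₀) + dist x x₀ := by linarith [dist_triangle x x₀ z]
      _ ≤ (r / 2 + d₀) + r / 2 := by rw [dist_comm x x₀]; linarith
      _ ≤ 2 * d₀ := by linarith
  have hμ : μ (ball x (dist x z)) ≤ ENNReal.ofReal Cμ * μ (ball x₀ d₀) :=
    (measure_mono hsub).trans (hVD x₀ d₀ hd₀)
  have h1 : φ x (dist x z) ≤ φ x (2 * d₀) :=
    (hφmono x).monotoneOn (Set.mem_Ici.mpr dist_nonneg)
      (Set.mem_Ici.mpr (by linarith)) hdxz
  have h2 : φ x (2 * d₀) ≤ c₃ * φ x₀ (2 * d₀) :=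
    hpvd x₀ x (2 * d₀) (by linarith)
  have h3 : φ x₀ (2 * d₀) ≤ c₂ * (2:ℝ) ^ β₂ * φ x₀ d₀ := by
    have := (hpvd1 x₀ d₀ (2 * d₀) hd₀ (by linarith)).2
    rwa [mul_div_assoc, div_self hd₀.ne', mul_one] at this
  have hφtot : φ x (dist x z) ≤ c₃ * (c₂ * (2:ℝ) ^ β₂) * φ x₀ d₀ := by
    calc φ x (dist x z) ≤ c₃ * φ x₀ (2 * d₀) := h1.trans h2
      _ ≤ c₃ * (c₂ * (2:ℝ) ^ β₂ * φ x₀ d₀) := by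
          exact mul_le_mul_of_nonneg_left h3 (by linarith)
      _ = c₃ * (c₂ * (2:ℝ) ^ β₂) * φ x₀ d₀ := by ring
  calc μ (ball x (dist x z)) * ENNReal.ofReal (φ x (dist x z))
      ≤ (ENNReal.ofReal Cμ * μ (ball x₀ d₀)) *
        ENNReal.ofReal (c₃ * (c₂ * (2:ℝ) ^ β₂) * φ x₀ d₀) :=
        mul_le_mul' hμ (ENNReal.ofReal_le_ofReal hφtot)
    _ = (ENNReal.ofReal Cμ * μ (ball x₀ d₀)) *
        (ENNReal.ofReal (c₃ * (c₂ * (2:ℝ) ^ β₂)) * ENNReal.ofReal (φ x₀ d₀)) := by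
        rw [ENNReal.ofReal_mul (by positivity)]
    _ = (ENNReal.ofReal Cμ * ENNReal.ofReal (c₃ * (c₂ * (2:ℝ) ^ β₂))) *
        (μ (ball x₀ d₀) * ENNReal.ofReal (φ x₀ d₀)) := by ring
    _ = ENNReal.ofReal (Cμ * (c₃ * (c₂ * (2:ℝ) ^ β₂))) *
        (μ (ball x₀ d₀) * ENNReal.ofReal (φ x₀ d₀)) := by
        rw [ENNReal.ofReal_mul (by linarith : (0:ℝ) ≤ Cμ),
          ENNReal.ofReal_mul (by linarith : (0:ℝ) ≤ c₃)]
end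

section
/- Let d ≥ 1, 0 < α₁ ≤ α₂ < 2, and α : ℝ^d → [α₁, α₂] satisfy |α(x) − α(y)| ≤ c / log(2/|x−y|) for all x, y ∈ ℝ^d with 0 < |x−y| < 1, for some constant c > 0. Define φ(x,r) = r^{α(x)} for 0 < r ≤ 1 and φ(x,r) = r^{α₁} for r > 1. Then there exists a constant c₃ ≥ 1 such that φ(y,r) ≤ c₃ φ(x,r) for all x, y ∈ ℝ^d and r > 0 with |x−y| ≤ r. -/
/-- Under the log-continuity condition on `α`, the scale function
`φ(x,r) = r^{α(x)}` for `0 < r ≤ 1`, `= r^{α₁}` for `r > 1`, satisfies condition (pvd):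
there is `c₃ ≥ 1` with `φ(y,r) ≤ c₃ φ(x,r)` whenever `|x - y| ≤ r`. -/
theorem stmt_9 (d : ℕ) (hd : 1 ≤ d) (α₁ α₂ : ℝ)
    (hα₁ : 0 < α₁) (hα₁₂ : α₁ ≤ α₂) (hα₂ : α₂ < 2)
    (α : EuclideanSpace ℝ (Fin d) → ℝ) (hα : ∀ x, α x ∈ Set.Icc α₁ α₂)
    (c : ℝ) (hc : 0 < c)
    (hlog : ∀ x y : EuclideanSpace ℝ (Fin d), 0 < ‖x - y‖ → ‖x - y‖ < 1 →
      |α x - α y| ≤ c / Real.log (2 / ‖x - y‖))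
    (φ : EuclideanSpace ℝ (Fin d) → ℝ → ℝ)
    (hφ1 : ∀ (x : EuclideanSpace ℝ (Fin d)) (r : ℝ), 0 < r → r ≤ 1 → φ x r = r ^ α x)
    (hφ2 : ∀ (x : EuclideanSpace ℝ (Fin d)) (r : ℝ), 1 < r → φ x r = r ^ α₁) :
    ∃ c₃ : ℝ, 1 ≤ c₃ ∧ ∀ (x y : EuclideanSpace ℝ (Fin d)) (r : ℝ), 0 < r →
      ‖x - y‖ ≤ r → φ y r ≤ c₃ * φ x r := by
  refine ⟨Real.exp c, Real.one_le_exp hc.le, fun x y r hr hxy => ?_⟩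
  rcases lt_or_ge 1 r with h1 | h1
  · rw [hφ2 x r h1, hφ2 y r h1]
    have hpos : (0:ℝ) < r ^ α₁ := Real.rpow_pos_of_pos hr _
    nlinarith [Real.one_le_exp hc.le]
  · rw [hφ1 x r hr h1, hφ1 y r hr h1]
    have hxpos : (0:ℝ) < r ^ α x := Real.rpow_pos_of_pos hr _
    have key : r ^ (α y - α x) ≤ Real.exp c := by
      by_cases h0 : ‖x - y‖ = 0
      · have hxy' : x = y := sub_eq_zero.mp (norm_eq_zero.mp h0)
        rw [hxy', sub_self, Real.rpow_zero]
        exact Real.one_le_exp hc.le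
      · have hn0 : 0 < ‖x - y‖ := lt_of_le_of_ne (norm_nonneg _) (Ne.symm h0)
        rcases eq_or_lt_of_le h1 with hr1 | hr1
        · rw [hr1, Real.one_rpow]
          exact Real.one_le_exp hc.le
        · have hn1 : ‖x - y‖ < 1 := lt_of_le_of_lt hxy hr1
          have hb := hlog x y hn0 hn1
          set L := Real.log (2 / r) with hL
          have hLpos : 0 < L := Real.log_pos (by
            rw [lt_div_iff₀ hr]; linarith)
          have hL'pos : 0 < Real.log (2 / ‖x - y‖) := Real.log_pos (by
            rw [lt_div_iff₀ hn0]; linarith)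
          have hLL : L ≤ Real.log (2 / ‖x - y‖) := by
            apply Real.log_le_log (by positivity)
            gcongr
          have hδ : α x - α y ≤ c / L := by
            calc α x - α y ≤ |α x - α y| := le_abs_self _
              _ ≤ c / Real.log (2 / ‖x - y‖) := hb
              _ ≤ c / L := by gcongr
          have step1 : r ^ (α y - α x) ≤ r ^ (-(c / L)) :=
            Real.rpow_le_rpow_of_exponent_ge hr h1 (by linarith)
          have hlogr : Real.log r ≤ 0 := Real.log_nonpos hr.le h1
          have hLge : -Real.log r ≤ L := by
            rw [hL, Real.log_div (by norm_num) (ne_of_gt hr)]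
            have : (0:ℝ) ≤ Real.log 2 := Real.log_nonneg (by norm_num)
            linarith
          have step2 : r ^ (-(c / L)) ≤ Real.exp c := by
            rw [Real.rpow_def_of_pos hr]
            apply Real.exp_le_exp.mpr
            have hcL : 0 ≤ c / L := div_nonneg hc.le hLpos.le
            calc Real.log r * -(c / L) = (c / L) * (-Real.log r) := by ring
              _ ≤ (c / L) * L := mul_le_mul_of_nonneg_left hLge hcL
              _ = c := by field_simp
          exact le_trans step1 step2
    calc r ^ α y = r ^ (α y - α x) * r ^ α x := by
          rw [← Real.rpow_add hr]; ring_nf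
      _ ≤ Real.exp c * r ^ α x := mul_le_mul_of_nonneg_right key hxpos.le
end

section
/- Let d ≥ 1, 0 < α₁ ≤ α₂ < 2, and α : ℝ^d → [α₁, α₂] satisfy |α(x) − α(y)| ≤ c / log(2/|x−y|) for all x, y ∈ ℝ^d with 0 < |x−y| < 1, for some constant c > 0. Define φ(x,r) = r^{α(x)} for 0 < r ≤ 1 and φ(x,r) = r^{α₁} for r > 1. Let J : ℝ^d × ℝ^d → [0,∞) satisfy, for some constants c₁, c₂ > 0: c₁ |x−y|^{−d−min(α(x),α(y))} ≤ J(x,y) ≤ c₂ |x−y|^{−d−max(α(x),α(y))} whenever 0 < |x−y| ≤ 1, and c₁ |x−y|^{−d−α₁} ≤ J(x,y) ≤ c₂ |x−y|^{−d−α₁} whenever |x−y| > 1. Then there exists a constant K ≥ 1 such that for all x ≠ y in ℝ^d: K^{−1} / (|x−y|^{d} φ(x,|x−y|)) ≤ J(x,y) ≤ K / (|x−y|^{d} φ(x,|x−y|)). -/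
lemma key_rpow (r t c : ℝ) (hc : 0 ≤ c) (hr0 : 0 < r) (hr1 : r < 1)
    (ht0 : 0 ≤ t) (ht : t ≤ c / Real.log (2 / r)) :
    Real.exp (-c) ≤ r ^ t := by
  have hL : 0 < Real.log (2 / r) := by
    apply Real.log_pos
    rw [lt_div_iff₀ hr0]; linarith
  have hlogr : Real.log r < 0 := Real.log_neg hr0 hr1
  have hL2 : Real.log (2 / r) = Real.log 2 - Real.log r := by
    rw [Real.log_div (by norm_num) (ne_of_gt hr0)]
  have h2 : (c / Real.log (2 / r)) * Real.log r ≤ t * Real.log r :=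
    mul_le_mul_of_nonpos_right ht (le_of_lt hlogr)
  have h3 : -c ≤ (c / Real.log (2 / r)) * Real.log r := by
    rw [div_mul_eq_mul_div, le_div_iff₀ hL]
    have hlog2 : 0 < Real.log 2 := Real.log_pos (by norm_num)
    nlinarith
  have h1 : -c ≤ t * Real.log r := le_trans h3 h2
  calc Real.exp (-c) ≤ Real.exp (t * Real.log r) := Real.exp_le_exp.mpr h1
    _ = r ^ t := by rw [Real.rpow_def_of_pos hr0, mul_comm]

/-- Under the log-continuity condition on `α`, a jump kernel `J` of variable order
comparable to `|x-y|^{-d-α(·)}` for `|x-y| ≤ 1` and to `|x-y|^{-d-α₁}` for `|x-y| > 1`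
is two-sided comparable to `1/(|x-y|^d φ(x,|x-y|))`, i.e. condition `J_φ` holds. -/
theorem stmt_11 (d : ℕ) (hd : 1 ≤ d) (α₁ α₂ : ℝ)
    (hα₁ : 0 < α₁) (hα₁₂ : α₁ ≤ α₂) (hα₂ : α₂ < 2)
    (α : EuclideanSpace ℝ (Fin d) → ℝ) (hα : ∀ x, α x ∈ Set.Icc α₁ α₂)
    (c : ℝ) (hc : 0 < c)
    (hlog : ∀ x y : EuclideanSpace ℝ (Fin d), 0 < ‖x - y‖ → ‖x - y‖ < 1 →
      |α x - α y| ≤ c / Real.log (2 / ‖x - y‖))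
    (φ : EuclideanSpace ℝ (Fin d) → ℝ → ℝ)
    (hφ1 : ∀ (x : EuclideanSpace ℝ (Fin d)) (r : ℝ), 0 < r → r ≤ 1 → φ x r = r ^ α x)
    (hφ2 : ∀ (x : EuclideanSpace ℝ (Fin d)) (r : ℝ), 1 < r → φ x r = r ^ α₁)
    (J : EuclideanSpace ℝ (Fin d) → EuclideanSpace ℝ (Fin d) → ℝ)
    (hJnonneg : ∀ x y, 0 ≤ J x y)
    (c₁ c₂ : ℝ) (hc₁ : 0 < c₁) (hc₂ : 0 < c₂)
    (hJsmall : ∀ x y : EuclideanSpace ℝ (Fin d), 0 < ‖x - y‖ → ‖x - y‖ ≤ 1 →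
      c₁ * ‖x - y‖ ^ (-(d : ℝ) - min (α x) (α y)) ≤ J x y ∧
        J x y ≤ c₂ * ‖x - y‖ ^ (-(d : ℝ) - max (α x) (α y)))
    (hJlarge : ∀ x y : EuclideanSpace ℝ (Fin d), 1 < ‖x - y‖ →
      c₁ * ‖x - y‖ ^ (-(d : ℝ) - α₁) ≤ J x y ∧ J x y ≤ c₂ * ‖x - y‖ ^ (-(d : ℝ) - α₁)) :
    ∃ K : ℝ, 1 ≤ K ∧ ∀ x y : EuclideanSpace ℝ (Fin d), x ≠ y →
      K⁻¹ / (‖x - y‖ ^ (d : ℝ) * φ x ‖x - y‖) ≤ J x y ∧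
        J x y ≤ K / (‖x - y‖ ^ (d : ℝ) * φ x ‖x - y‖) := by
  have hexp1 : 1 ≤ Real.exp c := Real.one_le_exp hc.le
  have hexppos : 0 < Real.exp c := Real.exp_pos c
  set K : ℝ := (max c₂ c₁⁻¹ + 1) * Real.exp c with hKdef
  have hmax0 : 0 < max c₂ c₁⁻¹ := lt_max_of_lt_left hc₂
  have hKpos : 0 < K := by positivity
  have hK1 : 1 ≤ K := by
    have h1 : (1:ℝ) ≤ max c₂ c₁⁻¹ + 1 := by linarith
    nlinarith
  have hKc₂ : c₂ * Real.exp c ≤ K := by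
    have := le_max_left c₂ c₁⁻¹
    nlinarith
  have hKc₁ : K⁻¹ ≤ c₁ * Real.exp (-c) := by
    have h1 : c₁⁻¹ * Real.exp c ≤ K := by
      have := le_max_right c₂ c₁⁻¹
      nlinarith
    have h2 : K⁻¹ ≤ (c₁⁻¹ * Real.exp c)⁻¹ :=
      inv_anti₀ (by positivity) h1
    calc K⁻¹ ≤ (c₁⁻¹ * Real.exp c)⁻¹ := h2
      _ = c₁ * Real.exp (-c) := by
        rw [mul_inv, inv_inv, Real.exp_neg]
  refine ⟨K, hK1, fun x y hxy => ?_⟩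
  set r : ℝ := ‖x - y‖ with hrdef
  have hr0 : 0 < r := by
    rw [hrdef, norm_pos_iff]
    exact sub_ne_zero.mpr hxy
  rcases le_or_gt r 1 with h1 | h1
  · -- small case
    have hφ : φ x r = r ^ α x := hφ1 x r hr0 h1
    have hD : r ^ (d : ℝ) * φ x r = r ^ ((d : ℝ) + α x) := by
      rw [hφ, Real.rpow_add hr0]
    set P : ℝ := r ^ (-((d : ℝ) + α x)) with hPdef
    have hP : 0 < P := Real.rpow_pos_of_pos hr0 _
    have hdiv : ∀ a : ℝ, a / (r ^ (d : ℝ) * φ x r) = a * P := by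
      intro a
      rw [hD, hPdef, Real.rpow_neg hr0.le, div_eq_mul_inv]
    have hbound : ∀ t : ℝ, 0 ≤ t → t ≤ |α x - α y| → Real.exp (-c) ≤ r ^ t := by
      intro t ht0 ht
      rcases lt_or_eq_of_le h1 with h | h
      · exact key_rpow r t c hc.le hr0 h ht0 (ht.trans (hlog x y hr0 h))
      · rw [h, Real.one_rpow]
        calc Real.exp (-c) ≤ Real.exp 0 := Real.exp_le_exp.mpr (by linarith)
          _ = 1 := Real.exp_zero
    have hA : Real.exp (-c) ≤ r ^ (α x - min (α x) (α y)) := by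
      apply hbound
      · exact sub_nonneg.mpr (min_le_left _ _)
      · rcases le_total (α x) (α y) with h | h
        · rw [min_eq_left h]; simp [abs_nonneg]
        · rw [min_eq_right h]; exact le_abs_self _
    have hB : Real.exp (-c) ≤ r ^ (max (α x) (α y) - α x) := by
      apply hbound
      · exact sub_nonneg.mpr (le_max_left _ _)
      · rcases le_total (α x) (α y) with h | h
        · rw [max_eq_right h, abs_sub_comm]; exact le_abs_self _
        · rw [max_eq_left h]; simp [abs_nonneg]
    have hPmin : P * r ^ (α x - min (α x) (α y)) = r ^ (-(d : ℝ) - min (α x) (α y)) := by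
      rw [hPdef, ← Real.rpow_add hr0]; congr 1; ring
    have hPmax : P * r ^ (α x - max (α x) (α y)) = r ^ (-(d : ℝ) - max (α x) (α y)) := by
      rw [hPdef, ← Real.rpow_add hr0]; congr 1; ring
    have hB' : r ^ (α x - max (α x) (α y)) ≤ Real.exp c := by
      rw [show α x - max (α x) (α y) = -(max (α x) (α y) - α x) by ring,
        Real.rpow_neg hr0.le,
        show Real.exp c = (Real.exp (-c))⁻¹ by rw [Real.exp_neg, inv_inv]]
      exact inv_anti₀ (Real.exp_pos _) hB
    constructor
    · rw [hdiv]
      have hJ := (hJsmall x y hr0 h1).1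
      calc K⁻¹ * P ≤ (c₁ * Real.exp (-c)) * P :=
            mul_le_mul_of_nonneg_right hKc₁ hP.le
        _ ≤ c₁ * (P * r ^ (α x - min (α x) (α y))) := by
            rw [show (c₁ * Real.exp (-c)) * P = c₁ * P * Real.exp (-c) by ring,
              show c₁ * (P * r ^ (α x - min (α x) (α y)))
                = c₁ * P * r ^ (α x - min (α x) (α y)) by ring]
            exact mul_le_mul_of_nonneg_left hA (by positivity)
        _ = c₁ * r ^ (-(d : ℝ) - min (α x) (α y)) := by rw [hPmin]
        _ ≤ J x y := hJ
    · rw [hdiv]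
      have hJ := (hJsmall x y hr0 h1).2
      calc J x y ≤ c₂ * r ^ (-(d : ℝ) - max (α x) (α y)) := hJ
        _ = c₂ * (P * r ^ (α x - max (α x) (α y))) := by rw [hPmax]
        _ ≤ (c₂ * Real.exp c) * P := by
            rw [show c₂ * (P * r ^ (α x - max (α x) (α y)))
                = c₂ * P * r ^ (α x - max (α x) (α y)) by ring,
              show (c₂ * Real.exp c) * P = c₂ * P * Real.exp c by ring]
            exact mul_le_mul_of_nonneg_left hB' (by positivity)
        _ ≤ K * P := mul_le_mul_of_nonneg_right hKc₂ hP.le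
  · -- large case
    have hφ : φ x r = r ^ α₁ := hφ2 x r h1
    have hD : r ^ (d : ℝ) * φ x r = r ^ ((d : ℝ) + α₁) := by
      rw [hφ, Real.rpow_add hr0]
    set P : ℝ := r ^ (-((d : ℝ) + α₁)) with hPdef
    have hP : 0 < P := Real.rpow_pos_of_pos hr0 _
    have hdiv : ∀ a : ℝ, a / (r ^ (d : ℝ) * φ x r) = a * P := by
      intro a
      rw [hD, hPdef, Real.rpow_neg hr0.le, div_eq_mul_inv]
    have hPeq : P = r ^ (-(d : ℝ) - α₁) := by
      rw [hPdef]; congr 1; ring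
    have hKc₁' : K⁻¹ ≤ c₁ := by
      have he : Real.exp (-c) ≤ 1 := by
        calc Real.exp (-c) ≤ Real.exp 0 := Real.exp_le_exp.mpr (by linarith)
          _ = 1 := Real.exp_zero
      nlinarith [Real.exp_pos (-c)]
    have hKc₂' : c₂ ≤ K := by nlinarith
    constructor
    · rw [hdiv, hPeq]
      calc K⁻¹ * r ^ (-(d : ℝ) - α₁) ≤ c₁ * r ^ (-(d : ℝ) - α₁) :=
            mul_le_mul_of_nonneg_right hKc₁' (Real.rpow_pos_of_pos hr0 _).le
        _ ≤ J x y := (hJlarge x y h1).1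
    · rw [hdiv, hPeq]
      calc J x y ≤ c₂ * r ^ (-(d : ℝ) - α₁) := (hJlarge x y h1).2
        _ ≤ K * r ^ (-(d : ℝ) - α₁) :=
            mul_le_mul_of_nonneg_right hKc₂' (Real.rpow_pos_of_pos hr0 _).le
end

section
/- Let d ≥ 1, 0 < α₁ ≤ α₂ < 2, and α : ℝ^d → [α₁, α₂] satisfy |α(x) − α(y)| ≤ c / log(2/|x−y|) for all x, y ∈ ℝ^d with 0 < |x−y| < 1, for some constant c > 0. Let J : ℝ^d × ℝ^d → [0,∞) be measurable and satisfy, for some constant c₁ > 0: J(x,z) ≥ c₁ |x−z|^{−d−min(α(x),α(z))} whenever 0 < |x−z| ≤ 1, and J(x,z) ≥ c₁ |x−z|^{−d−α₁} whenever |x−z| > 1. Then there exists a constant c' > 0 such that for every x ∈ ℝ^d and every 0 < r ≤ 1, ∫_{ℝ^d ∖ B(x,2r)} J(x,z) dz ≥ c' r^{−α(x)}. -/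
open MeasureTheory ENNReal

open Metric in
private lemma annulus_lower (d : ℕ) (hd : 1 ≤ d) (x : EuclideanSpace ℝ (Fin d)) (R₁ R₂ : ℝ)
    (h1 : 0 ≤ R₁) (h12 : R₁ ≤ R₂)
    (f : EuclideanSpace ℝ (Fin d) → ℝ≥0∞) (C : ℝ≥0∞)
    (hC : ∀ z ∈ closedBall x R₂ \ ball x R₁, C ≤ f z) :
    C * (ENNReal.ofReal (R₂ ^ d - R₁ ^ d) * volume (ball (0 : EuclideanSpace ℝ (Fin d)) 1))
      ≤ ∫⁻ z in (ball x R₁)ᶜ, f z := by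
  haveI : Nonempty (Fin d) := ⟨⟨0, hd⟩⟩
  haveI : Nontrivial (EuclideanSpace ℝ (Fin d)) := inferInstance
  have hsub : closedBall x R₂ \ ball x R₁ ⊆ (ball x R₁)ᶜ := fun z hz => hz.2
  calc C * (ENNReal.ofReal (R₂ ^ d - R₁ ^ d) * volume (ball (0 : EuclideanSpace ℝ (Fin d)) 1))
      = C * volume (closedBall x R₂ \ ball x R₁) := by
        rw [measure_diff (ball_subset_closedBall.trans (closedBall_subset_closedBall h12))
          measurableSet_ball.nullMeasurableSet (measure_ball_lt_top).ne]
        rw [Measure.addHaar_closedBall _ _ (h1.trans h12), Measure.addHaar_ball _ _ h1,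
          finrank_euclideanSpace_fin, ← ENNReal.sub_mul (fun _ _ => measure_ball_lt_top.ne),
          ← ENNReal.ofReal_sub _ (pow_nonneg h1 _)]
    _ ≤ ∫⁻ z in closedBall x R₂ \ ball x R₁, f z := by
        rw [← setLIntegral_const]
        exact setLIntegral_mono' (measurableSet_closedBall.diff measurableSet_ball) hC
    _ ≤ _ := lintegral_mono_set hsub

private lemma aux_exp (s a b c : ℝ) (hs : 0 < s) (hs1 : s ≤ 1) (hc : 0 ≤ c)
    (hlog : s < 1 → a - b ≤ c / Real.log (2 / s)) :
    Real.exp (-c) ≤ s ^ (a - min a b) := by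
  rcases le_total a b with h | h
  · rw [min_eq_left h, sub_self, Real.rpow_zero]
    exact Real.exp_le_one_iff.2 (neg_nonpos.2 hc)
  rw [min_eq_right h]
  rcases eq_or_lt_of_le hs1 with h1 | h1
  · rw [h1, Real.one_rpow]; exact Real.exp_le_one_iff.2 (neg_nonpos.2 hc)
  have hL : 0 < Real.log (2 / s) := Real.log_pos (by rw [lt_div_iff₀ hs]; linarith)
  have h2 : s ^ (c / Real.log (2 / s)) ≤ s ^ (a - b) :=
    Real.rpow_le_rpow_of_exponent_ge hs hs1 (hlog h1)
  refine le_trans ?_ h2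
  rw [Real.rpow_def_of_pos hs]
  apply Real.exp_le_exp.2
  rw [neg_le, ← neg_mul]
  have hls : -Real.log s ≤ Real.log (2 / s) := by
    rw [Real.log_div (by norm_num) hs.ne']
    have := Real.log_nonneg (by norm_num : (1:ℝ) ≤ 2)
    linarith
  calc -Real.log s * (c / Real.log (2 / s)) ≤ Real.log (2 / s) * (c / Real.log (2 / s)) :=
        mul_le_mul_of_nonneg_right hls (div_nonneg hc hL.le)
    _ = c := by field_simp

/-- Lower bound for the tail of the jump kernel: under the log-continuity condition on `α`
and the lower bound on `J`, there is `c' > 0` with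
`∫_{ℝ^d ∖ B(x,2r)} J(x,z) dz ≥ c' r^{-α(x)}` for all `x` and `0 < r ≤ 1`. -/
theorem stmt_12 (d : ℕ) (hd : 1 ≤ d) (α₁ α₂ : ℝ)
    (hα₁ : 0 < α₁) (hα₁₂ : α₁ ≤ α₂) (hα₂ : α₂ < 2)
    (α : EuclideanSpace ℝ (Fin d) → ℝ) (hα : ∀ x, α x ∈ Set.Icc α₁ α₂)
    (c : ℝ) (hc : 0 < c)
    (hlog : ∀ x y : EuclideanSpace ℝ (Fin d), 0 < ‖x - y‖ → ‖x - y‖ < 1 →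
      |α x - α y| ≤ c / Real.log (2 / ‖x - y‖))
    (J : EuclideanSpace ℝ (Fin d) → EuclideanSpace ℝ (Fin d) → ℝ)
    (hJmeas : Measurable (Function.uncurry J)) (hJnonneg : ∀ x z, 0 ≤ J x z)
    (c₁ : ℝ) (hc₁ : 0 < c₁)
    (hJsmall : ∀ x z : EuclideanSpace ℝ (Fin d), 0 < ‖x - z‖ → ‖x - z‖ ≤ 1 →
      c₁ * ‖x - z‖ ^ (-(d : ℝ) - min (α x) (α z)) ≤ J x z)
    (hJlarge : ∀ x z : EuclideanSpace ℝ (Fin d), 1 < ‖x - z‖ →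
      c₁ * ‖x - z‖ ^ (-(d : ℝ) - α₁) ≤ J x z) :
    ∃ c' : ℝ, 0 < c' ∧ ∀ (x : EuclideanSpace ℝ (Fin d)) (r : ℝ), 0 < r → r ≤ 1 →
      ENNReal.ofReal (c' * r ^ (-α x)) ≤
        ∫⁻ z in (Metric.ball x (2 * r))ᶜ, ENNReal.ofReal (J x z) := by
  haveI : Nonempty (Fin d) := ⟨⟨0, hd⟩⟩
  haveI : Nontrivial (EuclideanSpace ℝ (Fin d)) := inferInstance
  set V : ℝ := (volume (Metric.ball (0 : EuclideanSpace ℝ (Fin d)) 1)).toReal with hVdef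
  have hVeq : volume (Metric.ball (0 : EuclideanSpace ℝ (Fin d)) 1) = ENNReal.ofReal V :=
    (ENNReal.ofReal_toReal measure_ball_lt_top.ne).symm
  have hV : 0 < V :=
    ENNReal.toReal_pos (Metric.measure_ball_pos volume (0:EuclideanSpace ℝ (Fin d)) one_pos).ne' measure_ball_lt_top.ne
  have hP : (0:ℝ) < 3 ^ d - 2 ^ d := by
    have := pow_lt_pow_left₀ (by norm_num : (2:ℝ) < 3) (by norm_num) (Nat.one_le_iff_ne_zero.1 hd)
    linarith
  have hKpos : 0 < c₁ * Real.exp (-c) * ((3:ℝ) ^ d - 2 ^ d) * V :=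
    mul_pos (mul_pos (mul_pos hc₁ (Real.exp_pos _)) hP) hV
  refine ⟨c₁ * Real.exp (-c) * ((3:ℝ) ^ d - 2 ^ d) * V * (3:ℝ) ^ (-(d:ℝ) - α₂ - α₁),
    mul_pos hKpos (Real.rpow_pos_of_pos (by norm_num) _), ?_⟩
  intro x r hr hr1
  have hαx₁ : α₁ ≤ α x := (hα x).1
  have hαx₂ : α x ≤ α₂ := (hα x).2
  have hexp_neg : -(d:ℝ) - α x ≤ 0 := by
    have : (0:ℝ) ≤ d := Nat.cast_nonneg d
    linarith
  rcases le_or_gt r (1/3) with hr3 | hr3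
  · -- small r : annulus [2r, 3r]
    have h2r : (0:ℝ) ≤ 2 * r := by linarith
    have hC : ∀ z ∈ Metric.closedBall x (3*r) \ Metric.ball x (2*r),
        ENNReal.ofReal (c₁ * Real.exp (-c) * (3*r) ^ (-(d:ℝ) - α x)) ≤ ENNReal.ofReal (J x z) := by
      intro z hz
      apply ENNReal.ofReal_le_ofReal
      have hzx : dist z x = ‖x - z‖ := by rw [dist_eq_norm, norm_sub_rev]
      have hs_le : ‖x - z‖ ≤ 3 * r := by
        have := Metric.mem_closedBall.1 hz.1; rwa [hzx] at this
      have hs_ge : 2 * r ≤ ‖x - z‖ := by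
        have h := hz.2; rw [Metric.mem_ball, hzx] at h; linarith [not_lt.1 h]
      have hs : 0 < ‖x - z‖ := lt_of_lt_of_le (by linarith) hs_ge
      have hs1 : ‖x - z‖ ≤ 1 := by linarith
      refine le_trans ?_ (hJsmall x z hs hs1)
      have h1 : (3*r) ^ (-(d:ℝ) - α x) ≤ ‖x - z‖ ^ (-(d:ℝ) - α x) :=
        Real.rpow_le_rpow_of_nonpos hs hs_le hexp_neg
      have h2 : Real.exp (-c) ≤ ‖x - z‖ ^ (α x - min (α x) (α z)) := by
        refine aux_exp _ _ _ _ hs hs1 hc.le (fun hlt => ?_)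
        exact le_trans (le_abs_self _) (hlog x z hs hlt)
      have hsplit : ‖x - z‖ ^ (-(d:ℝ) - min (α x) (α z))
          = ‖x - z‖ ^ (-(d:ℝ) - α x) * ‖x - z‖ ^ (α x - min (α x) (α z)) := by
        rw [← Real.rpow_add hs]; congr 1; ring
      rw [hsplit]
      calc c₁ * Real.exp (-c) * (3*r) ^ (-(d:ℝ) - α x)
          = c₁ * ((3*r) ^ (-(d:ℝ) - α x) * Real.exp (-c)) := by ring
        _ ≤ c₁ * (‖x - z‖ ^ (-(d:ℝ) - α x) * ‖x - z‖ ^ (α x - min (α x) (α z))) :=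
            mul_le_mul_of_nonneg_left
              (mul_le_mul h1 h2 (Real.exp_pos _).le (Real.rpow_nonneg hs.le _)) hc₁.le
    have hann := annulus_lower d hd x (2*r) (3*r) h2r (by linarith)
      (fun z => ENNReal.ofReal (J x z)) _ hC
    refine le_trans ?_ hann
    rw [hVeq, ← ENNReal.ofReal_mul (sub_nonneg.2 (pow_le_pow_left₀ h2r (by linarith) d)),
      ← ENNReal.ofReal_mul (mul_nonneg (mul_nonneg hc₁.le (Real.exp_pos _).le) (Real.rpow_nonneg (by linarith) _))]
    apply ENNReal.ofReal_le_ofReal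
    have key : c₁ * Real.exp (-c) * (3*r) ^ (-(d:ℝ) - α x) * (((3*r)^d - (2*r)^d) * V)
        = (c₁ * Real.exp (-c) * ((3:ℝ) ^ d - 2 ^ d) * V) * ((3:ℝ) ^ (-(d:ℝ) - α x) * r ^ (-α x)) := by
      rw [Real.mul_rpow (by norm_num : (0:ℝ) ≤ 3) hr.le,
        show ((3*r:ℝ))^d - (2*r)^d = ((3:ℝ)^d - 2^d) * r^d by ring,
        show r ^ (-α x) = r ^ (-(d:ℝ) - α x) * r ^ d by
          rw [← Real.rpow_natCast r d, ← Real.rpow_add hr]; congr 1; ring]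
      ring
    rw [key]
    rw [mul_assoc (c₁ * Real.exp (-c) * ((3:ℝ) ^ d - 2 ^ d) * V)]
    refine mul_le_mul_of_nonneg_left ?_ hKpos.le
    exact mul_le_mul_of_nonneg_right
      (Real.rpow_le_rpow_of_exponent_le (by norm_num) (by linarith)) (Real.rpow_nonneg hr.le _)
  · -- large r : annulus [2, 3]
    have hmono : (Metric.ball x 2)ᶜ ⊆ (Metric.ball x (2*r))ᶜ :=
      Set.compl_subset_compl.2 (Metric.ball_subset_ball (by linarith))
    refine le_trans ?_ (lintegral_mono_set hmono)
    have hC : ∀ z ∈ Metric.closedBall x 3 \ Metric.ball x 2,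
        ENNReal.ofReal (c₁ * (3:ℝ) ^ (-(d:ℝ) - α₁)) ≤ ENNReal.ofReal (J x z) := by
      intro z hz
      apply ENNReal.ofReal_le_ofReal
      have hzx : dist z x = ‖x - z‖ := by rw [dist_eq_norm, norm_sub_rev]
      have hs_le : ‖x - z‖ ≤ 3 := by
        have := Metric.mem_closedBall.1 hz.1; rwa [hzx] at this
      have hs_ge : (2:ℝ) ≤ ‖x - z‖ := by
        have h := hz.2; rw [Metric.mem_ball, hzx] at h; linarith [not_lt.1 h]
      have hs : (1:ℝ) < ‖x - z‖ := by linarith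
      refine le_trans ?_ (hJlarge x z hs)
      refine mul_le_mul_of_nonneg_left ?_ hc₁.le
      refine Real.rpow_le_rpow_of_nonpos (by linarith) hs_le ?_
      have : (0:ℝ) ≤ d := Nat.cast_nonneg d
      linarith
    have hann := annulus_lower d hd x 2 3 (by norm_num) (by norm_num)
      (fun z => ENNReal.ofReal (J x z)) _ hC
    refine le_trans ?_ hann
    rw [hVeq, ← ENNReal.ofReal_mul hP.le,
      ← ENNReal.ofReal_mul (mul_nonneg hc₁.le (Real.rpow_nonneg (by norm_num) _))]
    apply ENNReal.ofReal_le_ofReal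
    have e2 : r ^ (-α x) ≤ (3:ℝ) ^ α₂ := by
      have h1 : r ^ (-α x) ≤ ((1/3:ℝ)) ^ (-α x) :=
        Real.rpow_le_rpow_of_nonpos (by norm_num) hr3.le (by linarith)
      have h2 : ((1/3:ℝ)) ^ (-α x) = (3:ℝ) ^ (α x) := by
        rw [one_div, Real.inv_rpow (by norm_num), ← Real.rpow_neg (by norm_num), neg_neg]
      rw [h2] at h1
      exact h1.trans (Real.rpow_le_rpow_of_exponent_le (by norm_num) (by linarith))
    have e1 : (3:ℝ) ^ (-(d:ℝ) - α₂ - α₁) = 3 ^ (-(d:ℝ) - α₁) * 3 ^ (-α₂) := by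
      rw [← Real.rpow_add (by norm_num)]; congr 1; ring
    have e3 : c₁ * Real.exp (-c) * ((3:ℝ) ^ d - 2 ^ d) * V ≤ c₁ * ((3:ℝ) ^ d - 2 ^ d) * V := by
      have h := Real.exp_le_one_iff.2 (neg_nonpos.2 hc.le)
      nlinarith [mul_pos (mul_pos hc₁ hP) hV]
    have e4 : (3:ℝ) ^ (-α₂) * (3:ℝ) ^ α₂ = 1 := by
      rw [← Real.rpow_add (by norm_num)]; simp
    calc c₁ * Real.exp (-c) * ((3:ℝ) ^ d - 2 ^ d) * V * (3:ℝ) ^ (-(d:ℝ) - α₂ - α₁) * r ^ (-α x)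
        ≤ c₁ * ((3:ℝ) ^ d - 2 ^ d) * V * (3:ℝ) ^ (-(d:ℝ) - α₂ - α₁) * (3:ℝ) ^ α₂ := by
          have hpos : (0:ℝ) < (3:ℝ) ^ (-(d:ℝ) - α₂ - α₁) := Real.rpow_pos_of_pos (by norm_num) _
          have hfac := mul_le_mul (mul_le_mul_of_nonneg_right e3 hpos.le) e2
            (Real.rpow_nonneg hr.le _) (by positivity)
          linarith [hfac]
      _ = c₁ * (3:ℝ) ^ (-(d:ℝ) - α₁) * (((3:ℝ) ^ d - 2 ^ d) * V) * ((3:ℝ) ^ (-α₂) * (3:ℝ) ^ α₂) := by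
          rw [e1]; ring
      _ = c₁ * (3:ℝ) ^ (-(d:ℝ) - α₁) * (((3:ℝ) ^ d - 2 ^ d) * V) := by rw [e4, mul_one]
end

section
/- (Fractional Nash inequality.) Let d ≥ 1 and 0 < α < 2. There exists a constant C > 0, depending only on d and α, such that for every function f ∈ L¹(ℝ^d) ∩ L²(ℝ^d): ‖f‖₂^{2 + 2α/d} ≤ C · ( ∫_{ℝ^d} ∫_{ℝ^d} (f(x) − f(y))² |x−y|^{−d−α} dx dy ) · ‖f‖₁^{2α/d}. -/
/-!
For `‖x - y‖ ≥ r` one has `(f x² + f y²) ‖x - y‖^(-d-α) ≤ (f x - f y)² ‖x - y‖^(-d-α) +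
2 |f x| |f y| r^(-d-α)`. Integrating over both variables, and using that by scaling
`∫_{‖h‖ ≥ r} ‖h‖^(-d-α) dh = κ r^(-α)` with `0 < κ < ∞`, gives
`2 κ r^(-α) ‖f‖₂² ≤ I(f) + 2 r^(-d-α) ‖f‖₁²` for every `r > 0`, where `I(f)` is the double
integral. Choosing `r^d = 2 ‖f‖₁² / (κ ‖f‖₂²)` balances the last term against half of the
left-hand side, which yields the inequality with `C = 2^(α/d) / κ^(1+α/d)`.
-/

open MeasureTheory ENNReal Module Set

noncomputable def rpowTail (ρ r : ℝ) : ℝ → ℝ≥0∞ := (Ici r).indicator fun t ↦ ENNReal.ofReal (t ^ ρ)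

@[fun_prop]
lemma measurable_rpowTail (ρ r : ℝ) : Measurable (rpowTail ρ r) :=
  (by fun_prop : Measurable fun t : ℝ ↦ ENNReal.ofReal (t ^ ρ)).indicator measurableSet_Ici

lemma rpowTail_of_lt {ρ r t : ℝ} (h : t < r) : rpowTail ρ r t = 0 :=
  indicator_of_notMem (notMem_Ici.mpr h) _

lemma rpowTail_of_le {ρ r t : ℝ} (h : r ≤ t) : rpowTail ρ r t = ENNReal.ofReal (t ^ ρ) :=
  indicator_of_mem (mem_Ici.mpr h) _

lemma rpowTail_mul_left {ρ r : ℝ} (hr : 0 < r) (t : ℝ) :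
    rpowTail ρ r (r * t) = ENNReal.ofReal (r ^ ρ) * rpowTail ρ 1 t := by
  rcases lt_or_ge t 1 with ht | ht
  · rw [rpowTail_of_lt (by nlinarith), rpowTail_of_lt ht, mul_zero]
  · rw [rpowTail_of_le (by nlinarith), rpowTail_of_le ht, Real.mul_rpow hr.le (by linarith),
      ENNReal.ofReal_mul (by positivity)]

theorem lintegral_rpowTail_norm_pos {E : Type*} [NormedAddCommGroup E] [NormedSpace ℝ E]
    [Nontrivial E] [MeasurableSpace E] [BorelSpace E] (μ : Measure E) [μ.IsOpenPosMeasure] (ρ : ℝ) :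
    0 < ∫⁻ h, rpowTail ρ 1 ‖h‖ ∂μ := by
  rw [lintegral_pos_iff_support (by fun_prop)]
  refine ((isOpen_lt continuous_const continuous_norm).measure_pos μ
    (NormedSpace.exists_lt_norm ℝ E 1)).trans_le (measure_mono fun h (hh : 1 < ‖h‖) ↦ ?_)
  rw [Function.mem_support, rpowTail_of_le hh.le]
  exact (ENNReal.ofReal_pos.mpr (Real.rpow_pos_of_pos (by linarith) ρ)).ne'

section Haar

variable {E : Type*} [NormedAddCommGroup E] [NormedSpace ℝ E] [FiniteDimensional ℝ E]
  [MeasurableSpace E] [BorelSpace E] (μ : Measure E) [μ.IsAddHaarMeasure]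

theorem lintegral_comp_inv_smul_of_pos (f : E → ℝ≥0∞) {r : ℝ} (hr : 0 < r) :
    ∫⁻ x, f (r⁻¹ • x) ∂μ = ENNReal.ofReal (r ^ finrank ℝ E) * ∫⁻ x, f x ∂μ := by
  let e := (Homeomorph.smulOfNeZero (α := E) r⁻¹ (inv_ne_zero hr.ne')).toMeasurableEquiv
  calc ∫⁻ x, f (r⁻¹ • x) ∂μ = ∫⁻ x, f x ∂(μ.map (r⁻¹ • ·)) := (lintegral_map_equiv f e).symm
    _ = _ := by
      rw [Measure.map_addHaar_smul μ (inv_ne_zero hr.ne'), lintegral_smul_measure, inv_pow,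
        inv_inv, abs_of_pos (by positivity), smul_eq_mul]

theorem lintegral_rpowTail_norm {ρ r : ℝ} (hr : 0 < r) :
    ∫⁻ h, rpowTail ρ r ‖h‖ ∂μ =
      ENNReal.ofReal (r ^ (finrank ℝ E + ρ)) * ∫⁻ h, rpowTail ρ 1 ‖h‖ ∂μ := by
  have hscale (h : E) : rpowTail ρ r ‖h‖ = ENNReal.ofReal (r ^ ρ) * rpowTail ρ 1 ‖r⁻¹ • h‖ := by
    rw [← rpowTail_mul_left hr, norm_smul, Real.norm_of_nonneg (inv_nonneg.mpr hr.le),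
      mul_inv_cancel_left₀ hr.ne']
  simp_rw [hscale]
  rw [lintegral_const_mul _ (by fun_prop), lintegral_comp_inv_smul_of_pos μ (rpowTail ρ 1 ‖·‖) hr,
    ← mul_assoc, ← ENNReal.ofReal_mul (by positivity), Real.rpow_add hr, Real.rpow_natCast,
    mul_comm (r ^ ρ)]

theorem lintegral_rpowTail_norm_lt_top {ρ : ℝ} (hρ : ρ < -finrank ℝ E) :
    ∫⁻ h, rpowTail ρ 1 ‖h‖ ∂μ < ∞ := by
  -- on `1 ≤ ‖h‖` we have `1 + ‖h‖ ≤ 2 ‖h‖`, so `‖h‖ ^ ρ ≤ 2 ^ (-ρ) (1 + ‖h‖) ^ ρ`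
  have hbound (h : E) :
      rpowTail ρ 1 ‖h‖ ≤ ENNReal.ofReal (2 ^ (-ρ)) * ENNReal.ofReal ((1 + ‖h‖) ^ (-(-ρ))) := by
    rcases lt_or_ge ‖h‖ 1 with hh | hh
    · rw [rpowTail_of_lt hh]; exact zero_le
    rw [rpowTail_of_le hh, neg_neg, ← ENNReal.ofReal_mul (by positivity)]
    refine ENNReal.ofReal_le_ofReal ?_
    calc ‖h‖ ^ ρ = 2 ^ (-ρ) * (2 * ‖h‖) ^ ρ := by
          rw [Real.mul_rpow (by norm_num) (by positivity), ← mul_assoc,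
            ← Real.rpow_add (by norm_num), neg_add_cancel, Real.rpow_zero, one_mul]
      _ ≤ 2 ^ (-ρ) * (1 + ‖h‖) ^ ρ := by
          refine mul_le_mul_of_nonneg_left (Real.rpow_le_rpow_of_nonpos (by positivity)
            (by linarith) ?_) (by positivity)
          linarith [(finrank ℝ E).cast_nonneg (α := ℝ)]
  calc ∫⁻ h, rpowTail ρ 1 ‖h‖ ∂μ
      ≤ ∫⁻ h, ENNReal.ofReal (2 ^ (-ρ)) * ENNReal.ofReal ((1 + ‖h‖) ^ (-(-ρ))) ∂μ :=
        lintegral_mono hbound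
    _ < ∞ := by
      rw [lintegral_const_mul _ (by fun_prop)]
      exact ENNReal.mul_lt_top ENNReal.ofReal_lt_top
        (finite_integral_one_add_norm (by linarith))

end Haar

lemma sq_add_sq_mul_rpowTail_le {ρ r : ℝ} (hρ : ρ ≤ 0) (hr : 0 < r) (u v t : ℝ) :
    (‖u‖ₑ ^ 2 + ‖v‖ₑ ^ 2) * rpowTail ρ r t ≤
      ENNReal.ofReal ((u - v) ^ 2 * t ^ ρ) + ENNReal.ofReal (2 * r ^ ρ) * ‖u‖ₑ * ‖v‖ₑ := by
  rcases lt_or_ge t r with ht | ht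
  · simp [rpowTail_of_lt ht]
  rw [rpowTail_of_le ht]
  have htr : t ^ ρ ≤ r ^ ρ := Real.rpow_le_rpow_of_nonpos hr ht hρ
  have ht0 : 0 ≤ t ^ ρ := Real.rpow_nonneg (hr.le.trans ht) ρ
  -- `(u² + v²) w = (u - v)² w + 2 u v w` and `u v w ≤ |u| |v| r ^ ρ`
  have key : (u ^ 2 + v ^ 2) * t ^ ρ ≤ (u - v) ^ 2 * t ^ ρ + 2 * r ^ ρ * |u| * |v| := by
    have : u * v * t ^ ρ ≤ |u| * |v| * r ^ ρ := by
      rw [← abs_mul]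
      exact mul_le_mul (le_abs_self _) htr ht0 (abs_nonneg _)
    nlinarith
  convert ENNReal.ofReal_le_ofReal key using 1
  · rw [ENNReal.ofReal_mul (by positivity), ENNReal.ofReal_add (by positivity) (by positivity),
      Real.enorm_eq_ofReal_abs, Real.enorm_eq_ofReal_abs, ← ENNReal.ofReal_pow (abs_nonneg _),
      ← ENNReal.ofReal_pow (abs_nonneg _), sq_abs, sq_abs]
  · rw [Real.enorm_eq_ofReal_abs, Real.enorm_eq_ofReal_abs, ← ENNReal.ofReal_mul (by positivity),
      ← ENNReal.ofReal_mul (by positivity), ENNReal.ofReal_add (by positivity) (by positivity)]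

theorem two_mul_lintegral_rpowTail_mul_eLpNorm_sq_le {E : Type*} [NormedAddCommGroup E]
    [MeasurableSpace E] [BorelSpace E] [SecondCountableTopology E] {μ : Measure E} [SFinite μ]
    [μ.IsAddRightInvariant] {ρ r : ℝ} (hρ : ρ ≤ 0) (hr : 0 < r) {g : E → ℝ} (hg : Measurable g) :
    2 * ((∫⁻ h, rpowTail ρ r ‖h‖ ∂μ) * eLpNorm g 2 μ ^ 2) ≤
      (∫⁻ x, ∫⁻ y, ENNReal.ofReal ((g x - g y) ^ 2 * ‖x - y‖ ^ ρ) ∂μ ∂μ) +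
        ENNReal.ofReal (2 * r ^ ρ) * eLpNorm g 1 μ ^ 2 := by
  set K := ∫⁻ h, rpowTail ρ r ‖h‖ ∂μ
  set A := ∫⁻ x, ‖g x‖ₑ ^ 2 ∂μ
  set L := ∫⁻ x, ‖g x‖ₑ ∂μ
  have hL : eLpNorm g 1 μ = L := eLpNorm_one_eq_lintegral_enorm
  have hA : eLpNorm g 2 μ ^ 2 = A := by
    simpa using eLpNorm_nnreal_pow_eq_lintegral (f := g) (μ := μ) (p := 2) two_ne_zero
  have hK_left (x : E) : ∫⁻ y, rpowTail ρ r ‖x - y‖ ∂μ = K := by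
    simp_rw [norm_sub_rev x]
    exact lintegral_sub_right_eq_self (rpowTail ρ r ‖·‖) x
  have hK_right (y : E) : ∫⁻ x, rpowTail ρ r ‖x - y‖ ∂μ = K :=
    lintegral_sub_right_eq_self (rpowTail ρ r ‖·‖) y
  have hgx (x : E) : ∫⁻ y, ‖g x‖ₑ ^ 2 * rpowTail ρ r ‖x - y‖ ∂μ = ‖g x‖ₑ ^ 2 * K := by
    rw [lintegral_const_mul _ (by fun_prop), hK_left]
  have hgy : ∫⁻ x, ∫⁻ y, ‖g y‖ₑ ^ 2 * rpowTail ρ r ‖x - y‖ ∂μ ∂μ = A * K := by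
    rw [lintegral_lintegral_swap (by fun_prop)]
    calc _ = ∫⁻ y, ‖g y‖ₑ ^ 2 * K ∂μ :=
          lintegral_congr fun y ↦ by rw [lintegral_const_mul _ (by fun_prop), hK_right]
      _ = A * K := lintegral_mul_const _ (by fun_prop)
  have hcross (x : E) :
      ∫⁻ y, ENNReal.ofReal ((g x - g y) ^ 2 * ‖x - y‖ ^ ρ) +
          ENNReal.ofReal (2 * r ^ ρ) * ‖g x‖ₑ * ‖g y‖ₑ ∂μ =
        ∫⁻ y, ENNReal.ofReal ((g x - g y) ^ 2 * ‖x - y‖ ^ ρ) ∂μ +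
          ENNReal.ofReal (2 * r ^ ρ) * ‖g x‖ₑ * L := by
    rw [lintegral_add_right _ (by fun_prop), lintegral_const_mul _ (by fun_prop)]
  calc 2 * (K * eLpNorm g 2 μ ^ 2)
      = ∫⁻ x, ∫⁻ y, (‖g x‖ₑ ^ 2 + ‖g y‖ₑ ^ 2) * rpowTail ρ r ‖x - y‖ ∂μ ∂μ := by
        simp_rw [add_mul]
        rw [lintegral_congr fun x ↦ lintegral_add_left (by fun_prop) _]
        simp_rw [hgx]
        rw [lintegral_add_left (by fun_prop), lintegral_mul_const _ (by fun_prop), hgy, hA]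
        ring
    _ ≤ ∫⁻ x, ∫⁻ y, ENNReal.ofReal ((g x - g y) ^ 2 * ‖x - y‖ ^ ρ) +
          ENNReal.ofReal (2 * r ^ ρ) * ‖g x‖ₑ * ‖g y‖ₑ ∂μ ∂μ :=
        lintegral_mono fun x ↦ lintegral_mono fun y ↦ sq_add_sq_mul_rpowTail_le hρ hr _ _ _
    _ = _ := by
        simp_rw [hcross]
        rw [lintegral_add_right _ (by fun_prop), lintegral_mul_const _ (by fun_prop),
          lintegral_const_mul _ (by fun_prop), hL, mul_assoc, sq]

theorem Real.rpow_le_of_forall_two_mul_le {n α κ a b I : ℝ} (hn : 0 < n) (hκ : 0 < κ)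
    (ha : 0 < a) (hb : 0 < b)
    (h : ∀ r : ℝ, 0 < r → 2 * (r ^ (-α) * κ * a ^ 2) ≤ I + 2 * r ^ (-n - α) * b ^ 2) :
    a ^ (2 + 2 * α / n) ≤ 2 ^ (α / n) / κ ^ (1 + α / n) * I * b ^ (2 * α / n) := by
  set s := α / n
  set u := κ * a ^ 2
  set w := 2 * b ^ 2
  have hu : 0 < u := by positivity
  have hw : 0 < w := by positivity
  -- the optimal cut-off radius balances the two terms: `r ^ n = w / u`
  set r := (w / u) ^ n⁻¹
  have hr : 0 < r := by positivity
  have hrα : r ^ (-α) = u ^ s / w ^ s := by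
    rw [← Real.rpow_mul (by positivity), show n⁻¹ * -α = -s by ring, Real.rpow_neg (by positivity),
      Real.div_rpow hw.le hu.le, inv_div]
  have hrn : r ^ (-n - α) = u / w * r ^ (-α) := by
    rw [sub_eq_add_neg, Real.rpow_add hr, ← Real.rpow_mul (by positivity),
      show n⁻¹ * -n = -1 by field_simp, Real.rpow_neg_one, inv_div]
  have hbal : u * (u ^ s / w ^ s) ≤ I := by
    have key := h r hr
    rw [hrn] at key
    have e1 : 2 * (u / w * r ^ (-α)) * b ^ 2 = u * r ^ (-α) := by simp only [w]; field_simp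
    have e2 : r ^ (-α) * κ * a ^ 2 = u * r ^ (-α) := by simp only [u]; ring
    rw [← hrα]
    linarith
  have hus : u ^ (1 + s) = κ ^ (1 + s) * a ^ (2 + 2 * α / n) := by
    rw [Real.mul_rpow hκ.le (by positivity), ← Real.rpow_natCast, ← Real.rpow_mul ha.le]
    congr 2
    simp only [s]
    ring
  have hws : w ^ s = 2 ^ s * b ^ (2 * α / n) := by
    rw [Real.mul_rpow (by norm_num) (by positivity), ← Real.rpow_natCast, ← Real.rpow_mul hb.le]
    congr 2
    simp only [s]
    ring
  have hbal' : u ^ (1 + s) ≤ I * w ^ s := by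
    rwa [Real.rpow_add hu, Real.rpow_one, ← div_le_iff₀ (by positivity), mul_div_assoc]
  rw [hus, hws] at hbal'
  rw [div_mul_eq_mul_div, div_mul_eq_mul_div, le_div_iff₀ (by positivity)]
  linarith

theorem ENNReal.rpow_le_of_forall_two_mul_le {n α : ℝ} (hn : 0 < n) {K A B I : ℝ≥0∞}
    (hK0 : K ≠ 0) (hK : K ≠ ∞) (hA0 : A ≠ 0) (hA : A ≠ ∞) (hB0 : B ≠ 0) (hB : B ≠ ∞)
    (h : ∀ r : ℝ, 0 < r →
      2 * (ENNReal.ofReal (r ^ (-α)) * K * A ^ 2) ≤ I + ENNReal.ofReal (2 * r ^ (-n - α)) * B ^ 2) :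
    A ^ (2 + 2 * α / n) ≤
      ENNReal.ofReal (2 ^ (α / n) / K.toReal ^ (1 + α / n)) * I * B ^ (2 * α / n) := by
  have hκ : 0 < K.toReal := toReal_pos hK0 hK
  rcases eq_or_ne I ∞ with rfl | hI
  · rw [mul_top (ofReal_pos.mpr (by positivity)).ne',
      top_mul (rpow_pos (pos_iff_ne_zero.mpr hB0) hB).ne']
    exact le_top
  have hreal (r : ℝ) (hr : 0 < r) :
      2 * (r ^ (-α) * K.toReal * A.toReal ^ 2) ≤ I.toReal + 2 * r ^ (-n - α) * B.toReal ^ 2 := by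
    have := toReal_mono (by finiteness) (h r hr)
    rwa [toReal_add hI (by finiteness), toReal_mul, toReal_mul, toReal_mul, toReal_mul, toReal_pow,
      toReal_pow, toReal_ofReal (by positivity), toReal_ofReal (by positivity), toReal_ofNat]
      at this
  have := Real.rpow_le_of_forall_two_mul_le hn hκ (toReal_pos hA0 hA) (toReal_pos hB0 hB) hreal
  rw [← ofReal_toReal hA, ← ofReal_toReal hB, ← ofReal_toReal hI,
    ofReal_rpow_of_pos (toReal_pos hA0 hA), ofReal_rpow_of_pos (toReal_pos hB0 hB),
    ← ofReal_mul (by positivity), ← ofReal_mul (by positivity)]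
  exact ofReal_le_ofReal this

theorem exists_fractional_nash_inequality {E : Type*} [NormedAddCommGroup E] [NormedSpace ℝ E]
    [FiniteDimensional ℝ E] [Nontrivial E] [MeasurableSpace E] [BorelSpace E] (μ : Measure E)
    [μ.IsAddHaarMeasure] {α : ℝ} (hα : 0 < α) :
    ∃ C : ℝ, 0 < C ∧ ∀ f : E → ℝ, MemLp f 1 μ → MemLp f 2 μ →
      eLpNorm f 2 μ ^ (2 + 2 * α / (finrank ℝ E : ℝ)) ≤
        ENNReal.ofReal C *
          (∫⁻ x, ∫⁻ y,
            ENNReal.ofReal ((f x - f y) ^ 2 * ‖x - y‖ ^ (-(finrank ℝ E : ℝ) - α)) ∂μ ∂μ) *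
          eLpNorm f 1 μ ^ (2 * α / (finrank ℝ E : ℝ)) := by
  set n : ℝ := (finrank ℝ E : ℝ)
  have hn : 0 < n := Nat.cast_pos.mpr finrank_pos
  set K := ∫⁻ h, rpowTail (-n - α) 1 ‖h‖ ∂μ
  have hK0 : K ≠ 0 := (lintegral_rpowTail_norm_pos μ _).ne'
  have hK : K ≠ ∞ := (lintegral_rpowTail_norm_lt_top μ (by linarith)).ne
  have hκ : 0 < K.toReal := ENNReal.toReal_pos hK0 hK
  refine ⟨2 ^ (α / n) / K.toReal ^ (1 + α / n), by positivity, fun f hf1 hf2 ↦ ?_⟩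
  obtain ⟨g, hg, hfg⟩ := hf1.aemeasurable
  have hI : ∫⁻ x, ∫⁻ y, ENNReal.ofReal ((f x - f y) ^ 2 * ‖x - y‖ ^ (-n - α)) ∂μ ∂μ =
      ∫⁻ x, ∫⁻ y, ENNReal.ofReal ((g x - g y) ^ 2 * ‖x - y‖ ^ (-n - α)) ∂μ ∂μ :=
    lintegral_congr_ae <| hfg.mono fun x hx ↦ lintegral_congr_ae <| hfg.mono fun y hy ↦ by
      simp only [hx, hy]
  rw [eLpNorm_congr_ae hfg, eLpNorm_congr_ae hfg, hI]
  rcases eq_or_ne (eLpNorm g 2 μ) 0 with hA0 | hA0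
  · rw [hA0, ENNReal.zero_rpow_of_pos (by positivity)]
    exact zero_le
  have hB0 : eLpNorm g 1 μ ≠ 0 := by
    contrapose! hA0
    rw [eLpNorm_eq_zero_iff hg.aestronglyMeasurable one_ne_zero] at hA0
    rw [eLpNorm_congr_ae hA0, eLpNorm_zero]
  refine ENNReal.rpow_le_of_forall_two_mul_le hn hK0 hK hA0 (hf2.ae_eq hfg).eLpNorm_ne_top hB0
    (hf1.ae_eq hfg).eLpNorm_ne_top fun r hr ↦ ?_
  have hKr : ENNReal.ofReal (r ^ (-α)) * K = ∫⁻ h, rpowTail (-n - α) r ‖h‖ ∂μ := by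
    rw [lintegral_rpowTail_norm μ hr, show n + (-n - α) = -α by ring]
  rw [hKr]
  exact two_mul_lintegral_rpowTail_mul_eLpNorm_sq_le (by linarith) hr hg

theorem stmt_14_general (d : ℕ) (hd : 1 ≤ d) (α : ℝ) (hα0 : 0 < α) :
    ∃ C : ℝ, 0 < C ∧ ∀ f : EuclideanSpace ℝ (Fin d) → ℝ,
      MemLp f 1 volume → MemLp f 2 volume →
      eLpNorm f 2 volume ^ (2 + 2 * α / (d : ℝ)) ≤
        ENNReal.ofReal C *
          (∫⁻ x, ∫⁻ y, ENNReal.ofReal ((f x - f y) ^ 2 * ‖x - y‖ ^ (-(d : ℝ) - α))) *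
          eLpNorm f 1 volume ^ (2 * α / (d : ℝ)) := by
  have : Nontrivial (EuclideanSpace ℝ (Fin d)) :=
    Module.nontrivial_of_finrank_pos (R := ℝ) (by rwa [finrank_euclideanSpace_fin])
  have nash := exists_fractional_nash_inequality (volume : Measure (EuclideanSpace ℝ (Fin d))) hα0
  rwa [finrank_euclideanSpace_fin] at nash

/-- Fractional Nash inequality: for `0 < α < 2` there is `C > 0` depending only on `d`
and `α` such that for every `f ∈ L¹(ℝ^d) ∩ L²(ℝ^d)`,
`‖f‖₂^{2+2α/d} ≤ C (∬ (f(x)-f(y))² |x-y|^{-d-α} dx dy) ‖f‖₁^{2α/d}`. -/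
theorem stmt_14 (d : ℕ) (hd : 1 ≤ d) (α : ℝ) (hα0 : 0 < α) (hα2 : α < 2) :
    ∃ C : ℝ, 0 < C ∧ ∀ f : EuclideanSpace ℝ (Fin d) → ℝ,
      MemLp f 1 volume → MemLp f 2 volume →
      eLpNorm f 2 volume ^ (2 + 2 * α / (d : ℝ)) ≤
        ENNReal.ofReal C *
          (∫⁻ x, ∫⁻ y, ENNReal.ofReal ((f x - f y) ^ 2 * ‖x - y‖ ^ (-(d : ℝ) - α))) *
          eLpNorm f 1 volume ^ (2 * α / (d : ℝ)) :=
  stmt_14_general d hd α hα0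
end
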